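/- Let G = ⟨a⟩ ≅ Z_{2^n} with n ≥ 3, acting on itself by right multiplication inside Hol(G). The subgroup R = ⟨a², a x⟩ of Hol(G) acts regularly on G and is isomorphic to the dihedral group D_{2^n} of order 2^n. -/
import Mathlib


/-- The element `a^b x^?y^?` of the holomorph of `ZMod N`, viewed as the permutation
`g ↦ (g + b) * u` of `ZMod N`. -/
def aff (N : ℕ) (u : (ZMod N)ˣ) (b : ZMod N) : Equiv.Perm (ZMod N) :=
  (Equiv.addRight b).trans (Units.mulRight u)

/-- The automorphism `y : a ↦ a^5` of `ZMod (2^n)` as a unit. -/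
def u5 (n : ℕ) : (ZMod (2 ^ n))ˣ :=
  ZMod.unitOfCoprime 5 (Nat.Coprime.pow_right n (by decide))

/-- A permutation is semiregular if every power of it fixing a point is the identity. -/
def Semiregular {α : Type*} (σ : Equiv.Perm α) : Prop :=
  ∀ (k : ℤ) (g : α), (σ ^ k) g = g → σ ^ k = 1

section Aux

open DihedralGroup

instance instNeZeroPowTwo (k : ℕ) : NeZero (2 ^ k) := ⟨pow_ne_zero _ two_ne_zero⟩

lemma aff_apply {N : ℕ} (u : (ZMod N)ˣ) (b g : ZMod N) : aff N u b g = (g + b) * u := rfl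

lemma R0_apply {N : ℕ} (b g : ZMod N) : aff N 1 b g = g + b := by
  simp [aff_apply]

lemma S_apply {N : ℕ} (c g : ZMod N) : aff N (-1) c g = -(g + c) := by
  simp [aff_apply]

lemma R0_mul_R0 {N : ℕ} (b b' : ZMod N) :
    aff N 1 b * aff N 1 b' = aff N 1 (b + b') := by
  ext g; simp [Equiv.Perm.mul_apply, R0_apply]; ring

lemma R0_mul_S {N : ℕ} (b c : ZMod N) :
    aff N 1 b * aff N (-1) c = aff N (-1) (c - b) := by
  ext g; simp [Equiv.Perm.mul_apply, R0_apply, S_apply]; ring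

lemma S_mul_R0 {N : ℕ} (c b : ZMod N) :
    aff N (-1) c * aff N 1 b = aff N (-1) (b + c) := by
  ext g; simp [Equiv.Perm.mul_apply, R0_apply, S_apply]; ring

lemma S_mul_S {N : ℕ} (c c' : ZMod N) :
    aff N (-1) c * aff N (-1) c' = aff N 1 (c' - c) := by
  ext g; simp [Equiv.Perm.mul_apply, S_apply, R0_apply]; ring

lemma R0_pow {N : ℕ} (b : ZMod N) (k : ℕ) :
    aff N 1 b ^ k = aff N 1 (k * b) := by
  induction k with
  | zero => ext g; simp [R0_apply]
  | succ k ih =>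
      rw [pow_succ, ih, R0_mul_R0]
      congr 1
      push_cast
      ring

/-- The doubling additive hom `ZMod (2^(n-1)) →+ ZMod (2^n)`. -/
def dN (n : ℕ) : ZMod (2 ^ (n - 1)) →+ ZMod (2 ^ n) :=
  ZMod.lift _ ⟨AddMonoidHom.mk' (fun k : ℤ => 2 * (k : ZMod (2 ^ n))) (by
      intro a b; push_cast; ring), by
    simp only [AddMonoidHom.mk'_apply]
    cases n with
    | zero =>
        haveI : Subsingleton (ZMod (2 ^ 0)) := by rw [pow_zero]; infer_instance
        exact Subsingleton.elim _ _
    | succ k =>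
        have h1 : ((2 ^ (k + 1) : ℕ) : ZMod (2 ^ (k + 1))) = 0 := ZMod.natCast_self _
        push_cast [pow_succ] at h1 ⊢
        linear_combination h1⟩

lemma dN_intCast (n : ℕ) (k : ℤ) : dN n ((k : ZMod (2 ^ (n - 1)))) = 2 * (k : ZMod (2 ^ n)) :=
  ZMod.lift_coe _ _ _

lemma dN_natCast (n : ℕ) (k : ℕ) : dN n ((k : ZMod (2 ^ (n - 1)))) = 2 * (k : ZMod (2 ^ n)) := by
  have := dN_intCast n (k : ℤ)
  push_cast at this
  exact this

lemma dN_val (n : ℕ) (i : ZMod (2 ^ (n - 1))) : dN n i = 2 * ((i.val : ℕ) : ZMod (2 ^ n)) := by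
  conv_lhs => rw [← ZMod.natCast_zmod_val i]
  exact dN_natCast n i.val

lemma dN_inj (n : ℕ) (hn : n ≠ 0) (i : ZMod (2 ^ (n - 1))) (h : dN n i = 0) : i = 0 := by
  rw [dN_val] at h
  have h2 : ((2 * i.val : ℕ) : ZMod (2 ^ n)) = 0 := by push_cast; simpa using h
  rw [ZMod.natCast_eq_zero_iff] at h2
  have hlt : 2 * i.val < 2 ^ n := by
    have := ZMod.val_lt i
    calc 2 * i.val < 2 * 2 ^ (n - 1) := by omega
    _ = 2 ^ n := by
        rw [← pow_succ']
        congr 1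
        omega
  have hz : 2 * i.val = 0 := Nat.eq_zero_of_dvd_of_lt h2 hlt
  have : i.val = 0 := by omega
  exact (ZMod.val_eq_zero i).mp this

/-- The parity map. -/
def pr (n : ℕ) (hn : n ≠ 0) : ZMod (2 ^ n) →+* ZMod 2 :=
  ZMod.castHom (dvd_pow_self 2 hn) (ZMod 2)

lemma pr_apply (n : ℕ) (hn : n ≠ 0) (c : ZMod (2 ^ n)) :
    pr n hn c = ((c.val : ℕ) : ZMod 2) := by
  rw [pr, ZMod.castHom_apply, ZMod.natCast_val]

lemma pr_dN (n : ℕ) (hn : n ≠ 0) (i : ZMod (2 ^ (n - 1))) : pr n hn (dN n i) = 0 := by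
  rw [dN_val, map_mul]
  have : (pr n hn) 2 = 0 := by
    have : ((2 : ℕ) : ZMod (2 ^ n)) = (2 : ZMod (2 ^ n)) := by push_cast; rfl
    rw [← this, map_natCast]
    decide
  rw [this, zero_mul]

lemma exists_dN (n : ℕ) (hn : n ≠ 0) (c : ZMod (2 ^ n)) (h : pr n hn c = 0) :
    ∃ i, dN n i = c := by
  rw [pr_apply, ZMod.natCast_eq_zero_iff] at h
  obtain ⟨k, hk⟩ := h
  refine ⟨(k : ZMod (2 ^ (n - 1))), ?_⟩
  rw [dN_natCast]
  have : c = ((c.val : ℕ) : ZMod (2 ^ n)) := (ZMod.natCast_zmod_val c).symm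
  rw [this, hk]
  push_cast
  ring

lemma key_ne (n : ℕ) (hn : n ≠ 0) (i : ZMod (2 ^ (n - 1))) (g : ZMod (2 ^ n)) :
    2 * g + (dN n i + 1) ≠ 0 := by
  intro h
  have := congrArg (pr n hn) h
  rw [map_add, map_add, map_mul, map_one, pr_dN, map_zero] at this
  have h2 : (pr n hn) 2 = 0 := by
    have h22 : ((2 : ℕ) : ZMod (2 ^ n)) = (2 : ZMod (2 ^ n)) := by push_cast; rfl
    rw [← h22, map_natCast]
    decide
  rw [h2, zero_mul, zero_add, zero_add] at this
  exact one_ne_zero this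

/-- The underlying function of the embedding of the dihedral group. -/
def phiFun (n : ℕ) : DihedralGroup (2 ^ (n - 1)) → Equiv.Perm (ZMod (2 ^ n))
  | .r i => aff (2 ^ n) 1 (dN n i)
  | .sr i => aff (2 ^ n) (-1) (dN n i + 1)

/-- The embedding of the dihedral group into the permutations. -/
def phi (n : ℕ) : DihedralGroup (2 ^ (n - 1)) →* Equiv.Perm (ZMod (2 ^ n)) :=
  MonoidHom.mk' (phiFun n) (by
    rintro (i | i) (j | j)
    · rw [r_mul_r]
      show aff _ 1 (dN n (i + j)) = aff _ 1 (dN n i) * aff _ 1 (dN n j)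
      rw [R0_mul_R0, map_add]
    · rw [r_mul_sr]
      show aff _ (-1) (dN n (j - i) + 1) = aff _ 1 (dN n i) * aff _ (-1) (dN n j + 1)
      rw [R0_mul_S, map_sub]
      ring_nf
    · rw [sr_mul_r]
      show aff _ (-1) (dN n (i + j) + 1) = aff _ (-1) (dN n i + 1) * aff _ 1 (dN n j)
      rw [S_mul_R0, map_add]
      ring_nf
    · rw [sr_mul_sr]
      show aff _ 1 (dN n (j - i)) = aff _ (-1) (dN n i + 1) * aff _ (-1) (dN n j + 1)
      rw [S_mul_S, map_sub]
      ring_nf)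

lemma phi_r (n : ℕ) (i : ZMod (2 ^ (n - 1))) : phi n (r i) = aff (2 ^ n) 1 (dN n i) := rfl

lemma phi_sr (n : ℕ) (i : ZMod (2 ^ (n - 1))) :
    phi n (sr i) = aff (2 ^ n) (-1) (dN n i + 1) := rfl

lemma phi_r_one (n : ℕ) : phi n (r 1) = aff (2 ^ n) 1 2 := by
  rw [phi_r]
  congr 1
  have : ((1 : ℕ) : ZMod (2 ^ (n - 1))) = (1 : ZMod (2 ^ (n - 1))) := by push_cast; rfl
  rw [← this, dN_natCast]
  push_cast
  ring

lemma phi_sr_zero (n : ℕ) : phi n (sr 0) = aff (2 ^ n) (-1) 1 := by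
  rw [phi_sr, map_zero, zero_add]

lemma phi_injective (n : ℕ) (hn : n ≠ 0) : Function.Injective (phi n) := by
  rw [injective_iff_map_eq_one]
  rintro (i | i) h
  · have h0 := congrArg (fun e : Equiv.Perm (ZMod (2 ^ n)) => e 0) h
    simp only [phi_r, R0_apply, zero_add, Equiv.Perm.coe_one, id_eq] at h0
    rw [one_def, dN_inj n hn i h0]
  · exfalso
    have h0 := congrArg (fun e : Equiv.Perm (ZMod (2 ^ n)) => e 0) h
    simp only [phi_sr, S_apply, zero_add, Equiv.Perm.coe_one, id_eq, neg_eq_zero] at h0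
    exact key_ne n hn i 0 (by rw [mul_zero, zero_add]; exact h0)

lemma phi_range (n : ℕ) :
    (phi n).range = Subgroup.closure {aff (2 ^ n) 1 2, aff (2 ^ n) (-1) 1} := by
  apply le_antisymm
  · rintro σ ⟨x, rfl⟩
    have h1 : aff (2 ^ n) 1 2 ∈ Subgroup.closure {aff (2 ^ n) 1 2, aff (2 ^ n) (-1) 1} :=
      Subgroup.subset_closure (Set.mem_insert _ _)
    have h2 : aff (2 ^ n) (-1) 1 ∈ Subgroup.closure {aff (2 ^ n) 1 2, aff (2 ^ n) (-1) 1} :=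
      Subgroup.subset_closure (Set.mem_insert_of_mem _ rfl)
    have hrmem : ∀ i : ZMod (2 ^ (n - 1)),
        aff (2 ^ n) 1 (dN n i) ∈ Subgroup.closure {aff (2 ^ n) 1 2, aff (2 ^ n) (-1) 1} := by
      intro i
      have := pow_mem h1 i.val
      rw [R0_pow] at this
      have he : ((i.val : ℕ) : ZMod (2 ^ n)) * 2 = dN n i := by rw [dN_val]; ring
      rwa [he] at this
    obtain (i | i) := x
    · exact hrmem i
    · rw [phi_sr, ← S_mul_R0]
      exact mul_mem h2 (hrmem i)
  · rw [Subgroup.closure_le]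
    rintro σ (rfl | rfl)
    · exact ⟨r 1, phi_r_one n⟩
    · exact ⟨sr 0, phi_sr_zero n⟩

end Aux

/-- The subgroup `R = ⟨a², a x⟩` of `Hol(Z_{2^n})` (`n ≥ 3`) acts regularly on `Z_{2^n}`
(trivial point stabilizers and transitive) and is isomorphic to the dihedral group of
order `2^n`. -/
theorem dihedral_regular (n : ℕ) (hn : 3 ≤ n)
    (R : Subgroup (Equiv.Perm (ZMod (2 ^ n))))
    (hR : R = Subgroup.closure {aff (2 ^ n) 1 2, aff (2 ^ n) (-1) 1}) :
    (∀ σ ∈ R, ∀ g : ZMod (2 ^ n), σ g = g → σ = 1) ∧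
    (∀ g g' : ZMod (2 ^ n), ∃ σ ∈ R, σ g = g') ∧
    Nonempty (R ≃* DihedralGroup (2 ^ (n - 1))) := by
  have hn0 : n ≠ 0 := by omega
  have hRr : R = (phi n).range := by rw [hR, phi_range]
  refine ⟨?_, ?_, ?_⟩
  · -- trivial point stabilizers
    intro σ hσ g hg
    rw [hRr] at hσ
    obtain ⟨x, rfl⟩ := hσ
    obtain (i | i) := x
    · rw [phi_r, R0_apply] at hg
      have h0 : dN n i = 0 := by
        have := hg
        linear_combination hg
      have hi0 : i = 0 := dN_inj n hn0 i h0
      rw [hi0, ← DihedralGroup.one_def, map_one]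
    · exfalso
      rw [phi_sr, S_apply] at hg
      exact key_ne n hn0 i g (by linear_combination -hg)
  · -- transitivity
    intro g g'
    by_cases h : pr n hn0 (g' - g) = 0
    · obtain ⟨i, hi⟩ := exists_dN n hn0 _ h
      refine ⟨phi n (DihedralGroup.r i), hRr ▸ ⟨DihedralGroup.r i, rfl⟩, ?_⟩
      rw [phi_r, R0_apply, hi]
      ring
    · have hne : ∀ x : ZMod 2, x ≠ 0 → x = 1 := by decide
      have h1 : pr n hn0 g' - pr n hn0 g = 1 := by
        rw [← map_sub]; exact hne _ h
      have h0 : pr n hn0 (-g - g' - 1) = 0 := by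
        have hmap : pr n hn0 (-g - g' - 1)
            = -(pr n hn0 g) - pr n hn0 g' - 1 := by
          simp [map_sub, map_neg, map_one]
        have key : ∀ a b : ZMod 2, b - a = 1 → -a - b - 1 = 0 := by decide
        rw [hmap]
        exact key _ _ h1
      obtain ⟨i, hi⟩ := exists_dN n hn0 _ h0
      refine ⟨phi n (DihedralGroup.sr i), hRr ▸ ⟨DihedralGroup.sr i, rfl⟩, ?_⟩
      rw [phi_sr, S_apply, hi]
      ring
  · exact ⟨(MulEquiv.subgroupCongr hRr).trans (MonoidHom.ofInjective (phi_injective n hn0)).symm⟩
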